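/- For any Schwartz function u of (t,x), ‖u‖_{L^∞_t L²_x} ≤ C ‖(∂_t + ∂ₓₓₓ − ∂ₓₓ + I) u‖_{L¹_t L²_x}. -/

import Mathlib

open MeasureTheory

/-- The linearized KdV-Burgers operator plus identity, `∂_t + ∂ₓₓₓ − ∂ₓₓ + I`. -/
noncomputable def kdvbOp (u : ℝ → ℝ → ℂ) (t x : ℝ) : ℂ :=
  deriv (fun s => u s x) t + iteratedDeriv 3 (fun y => u t y) x
    - iteratedDeriv 2 (fun y => u t y) x + u t x

/-!
An energy estimate. Let `E(t) = ‖u(t, ·)‖²_{L²}` and `W = (∂ₜ + ∂ₓ³ - ∂ₓ² + 1) u`. Integrating by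
parts in `x`, `⟪u, ∂ₓ³u⟫ = -⟪∂ₓu, ∂ₓ²u⟫ = 0` and `⟪u, ∂ₓ²u⟫ = -‖∂ₓu‖² ≤ 0`, so
`E' = 2⟪u, ∂ₜu⟫ ≤ 2⟪u, W⟫ ≤ 2 √E ‖W‖`. As `E → 0` at `-∞`, integrating from `-∞` gives
`E(t) ≤ 2 √M ∫ ‖W(s, ·)‖ ds` with `M = sup E`, and taking the supremum over `t` yields
`√M ≤ 2 ∫ ‖W(s, ·)‖ ds`.
-/

open Filter Topology Set LineDeriv
open scoped InnerProductSpace Real SchwartzMap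

theorem sqrt_le_two_mul_integral_of_deriv_le {F F' G : ℝ → ℝ}
    (hF : ∀ t, HasDerivAt F (F' t) t) (hF' : ∀ t, F' t ≤ 2 * √(F t) * G t)
    (hG : Integrable G) (hG₀ : ∀ t, 0 ≤ G t) (hbdd : BddAbove (range F))
    (hlim : Tendsto F atBot (𝓝 0)) (t : ℝ) : √(F t) ≤ 2 * ∫ s, G s := by
  set M := sSup (range F)
  set I := ∫ s, G s
  have hFM : ∀ s, F s ≤ M := fun s => le_csSup hbdd ⟨s, rfl⟩
  have hM₀ : 0 ≤ M := le_of_tendsto hlim (Eventually.of_forall hFM)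
  have hI₀ : 0 ≤ I := integral_nonneg hG₀
  have hFI : ∀ s, F s ≤ 2 * √M * I := by
    intro s
    have hincr : ∀ a ≤ s, F s - F a ≤ 2 * √M * I := fun a ha =>
      calc F s - F a ≤ ∫ r in a..s, 2 * √M * G r :=
            intervalIntegral.sub_le_integral_of_hasDeriv_right_of_le ha
              (fun r _ => (hF r).continuousAt.continuousWithinAt)
              (fun r _ => (hF r).hasDerivWithinAt) (hG.const_mul _).integrableOn
              (fun r _ => (hF' r).trans (by gcongr; exacts [hG₀ r, hFM r]))
        _ ≤ 2 * √M * I := by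
            rw [intervalIntegral.integral_const_mul, intervalIntegral.integral_of_le ha]
            gcongr
            exact setIntegral_le_integral hG (Eventually.of_forall hG₀)
    have hlim' : Tendsto (fun a => F s - F a) atBot (𝓝 (F s - 0)) := tendsto_const_nhds.sub hlim
    simpa using le_of_tendsto hlim' (eventually_atBot.2 ⟨s, hincr⟩)
  have hM : M ≤ 2 * √M * I := csSup_le (range_nonempty F) (forall_mem_range.2 hFI)
  calc √(F t) ≤ √M := Real.sqrt_le_sqrt (hFM t)
    _ ≤ 2 * I := by nlinarith [Real.sq_sqrt hM₀, Real.sqrt_nonneg M]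

local notation "∂ₜ" => LineDeriv.lineDerivOp ((1 : ℝ), (0 : ℝ))
local notation "∂ₓ" => LineDeriv.lineDerivOp ((0 : ℝ), (1 : ℝ))

namespace SchwartzMap

section NormedSpace

variable {E : Type*} [NormedAddCommGroup E] [NormedSpace ℝ E]

theorem hasDerivAt_comp_prodMk_left (g : 𝓢(ℝ × ℝ, E)) (t x : ℝ) :
    HasDerivAt (fun s => g (s, x)) (∂ₜ g (t, x)) t :=
  g.differentiableAt.hasFDerivAt.comp_hasDerivAt t ((hasDerivAt_id t).prodMk (hasDerivAt_const t x))

theorem hasDerivAt_comp_prodMk_right (g : 𝓢(ℝ × ℝ, E)) (t x : ℝ) :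
    HasDerivAt (fun y => g (t, y)) (∂ₓ g (t, x)) x :=
  g.differentiableAt.hasFDerivAt.comp_hasDerivAt x ((hasDerivAt_const x t).prodMk (hasDerivAt_id x))

theorem iteratedDeriv_comp_prodMk_right (g : 𝓢(ℝ × ℝ, E)) (t : ℝ) (n : ℕ) :
    iteratedDeriv n (fun y => g (t, y)) = fun x => (∂ₓ^[n] g) (t, x) := by
  induction n with
  | zero => rfl
  | succ n ih =>
    ext x
    rw [iteratedDeriv_succ, ih, (hasDerivAt_comp_prodMk_right _ t x).deriv,
      Function.iterate_succ_apply']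

theorem exists_norm_le_inv_one_add_sq_mul (g : 𝓢(ℝ × ℝ, E)) :
    ∃ C, 0 ≤ C ∧ ∀ t x : ℝ, ‖g (t, x)‖ ≤ C * (1 + t ^ 2)⁻¹ * (1 + x ^ 2)⁻¹ := by
  set C := 2 ^ 4 * (Finset.Iic (4, 0)).sup (fun m => SchwartzMap.seminorm ℝ m.1 m.2) g
  refine ⟨C, by positivity, fun t x => ?_⟩
  have hdecay := one_add_le_sup_seminorm_apply (𝕜 := ℝ) (m := (4, 0)) le_rfl le_rfl g (t, x)
  rw [norm_iteratedFDeriv_zero] at hdecay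
  have ht : 1 + t ^ 2 ≤ (1 + ‖(t, x)‖) ^ 2 := by
    have : |t| ≤ ‖(t, x)‖ := le_max_left _ _
    nlinarith [abs_nonneg t, sq_abs t]
  have hx : 1 + x ^ 2 ≤ (1 + ‖(t, x)‖) ^ 2 := by
    have : |x| ≤ ‖(t, x)‖ := le_max_right _ _
    nlinarith [abs_nonneg x, sq_abs x]
  rw [mul_assoc, ← mul_inv, le_mul_inv_iff₀ (by positivity)]
  calc ‖g (t, x)‖ * ((1 + t ^ 2) * (1 + x ^ 2))
      ≤ ‖g (t, x)‖ * (1 + ‖(t, x)‖) ^ 4 := by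
        gcongr
        calc (1 + t ^ 2) * (1 + x ^ 2) ≤ (1 + ‖(t, x)‖) ^ 2 * (1 + ‖(t, x)‖) ^ 2 := by gcongr
          _ = _ := by ring
    _ ≤ C := by rw [mul_comm]; exact hdecay

theorem exists_norm_mul_norm_le (g h : 𝓢(ℝ × ℝ, E)) :
    ∃ C, ∀ t x : ℝ, ‖g (t, x)‖ * ‖h (t, x)‖ ≤ C * (1 + x ^ 2)⁻¹ := by
  obtain ⟨Cg, hCg, hg⟩ := g.exists_norm_le_inv_one_add_sq_mul
  obtain ⟨Ch, hCh, hh⟩ := h.exists_norm_le_inv_one_add_sq_mul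
  refine ⟨Cg * Ch, fun t x => ?_⟩
  have ht : (1 + t ^ 2)⁻¹ ≤ 1 := inv_le_one_of_one_le₀ (by nlinarith)
  have hx : (1 + x ^ 2)⁻¹ ≤ 1 := inv_le_one_of_one_le₀ (by nlinarith)
  calc ‖g (t, x)‖ * ‖h (t, x)‖
      ≤ (Cg * (1 + t ^ 2)⁻¹ * (1 + x ^ 2)⁻¹) * (Ch * (1 + t ^ 2)⁻¹ * (1 + x ^ 2)⁻¹) := by
        gcongr
        exacts [hg t x, hh t x]
    _ ≤ (Cg * 1 * (1 + x ^ 2)⁻¹) * (Ch * 1 * 1) := by gcongr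
    _ = Cg * Ch * (1 + x ^ 2)⁻¹ := by ring

theorem integrable_norm_mul_norm_comp_prodMk_right (g h : 𝓢(ℝ × ℝ, E)) (t : ℝ) :
    Integrable (fun x => ‖g (t, x)‖ * ‖h (t, x)‖) := by
  obtain ⟨C, hC⟩ := exists_norm_mul_norm_le g h
  refine (integrable_inv_one_add_sq.const_mul C).mono' ?_ (Eventually.of_forall fun x => ?_)
  · exact ((g.continuous.comp (Continuous.prodMk_right t)).norm.mul
      (h.continuous.comp (Continuous.prodMk_right t)).norm).aestronglyMeasurable
  · rw [Real.norm_of_nonneg (by positivity)]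
    exact hC t x

noncomputable def kdvb (u : 𝓢(ℝ × ℝ, E)) : 𝓢(ℝ × ℝ, E) := ∂ₜ u + ∂ₓ^[3] u - ∂ₓ^[2] u + u

noncomputable def sliceEnergy (g : 𝓢(ℝ × ℝ, E)) (t : ℝ) : ℝ := ∫ x, ‖g (t, x)‖ ^ 2

theorem sliceEnergy_nonneg (g : 𝓢(ℝ × ℝ, E)) (t : ℝ) : 0 ≤ g.sliceEnergy t :=
  integral_nonneg fun _ => sq_nonneg _

theorem exists_sqrt_sliceEnergy_le (g : 𝓢(ℝ × ℝ, E)) :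
    ∃ C, 0 ≤ C ∧ ∀ t, √(g.sliceEnergy t) ≤ C * (1 + t ^ 2)⁻¹ := by
  obtain ⟨C, hC₀, hC⟩ := g.exists_norm_le_inv_one_add_sq_mul
  refine ⟨C * √π, by positivity, fun t => ?_⟩
  have hx : ∀ x : ℝ, ((1 + x ^ 2)⁻¹) ^ 2 ≤ (1 + x ^ 2)⁻¹ := fun x =>
    pow_le_of_le_one (by positivity) (inv_le_one_of_one_le₀ (by nlinarith)) two_ne_zero
  have hE : g.sliceEnergy t ≤ (C * (1 + t ^ 2)⁻¹) ^ 2 * π := by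
    rw [← integral_univ_inv_one_add_sq, ← integral_const_mul]
    refine integral_mono_of_nonneg (Eventually.of_forall fun _ => sq_nonneg _)
      (integrable_inv_one_add_sq.const_mul _) (Eventually.of_forall fun x => ?_)
    calc ‖g (t, x)‖ ^ 2 ≤ (C * (1 + t ^ 2)⁻¹ * (1 + x ^ 2)⁻¹) ^ 2 := by gcongr; exact hC t x
      _ = (C * (1 + t ^ 2)⁻¹) ^ 2 * ((1 + x ^ 2)⁻¹) ^ 2 := by ring
      _ ≤ (C * (1 + t ^ 2)⁻¹) ^ 2 * (1 + x ^ 2)⁻¹ := by gcongr; exact hx x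
  calc √(g.sliceEnergy t) ≤ √((C * (1 + t ^ 2)⁻¹) ^ 2 * π) := Real.sqrt_le_sqrt hE
    _ = C * √π * (1 + t ^ 2)⁻¹ := by
      rw [Real.sqrt_mul (sq_nonneg _), Real.sqrt_sq (by positivity)]; ring

end NormedSpace

section InnerProductSpace

variable {E : Type*} [NormedAddCommGroup E] [InnerProductSpace ℝ E]

theorem integrable_inner_comp_prodMk_right (g h : 𝓢(ℝ × ℝ, E)) (t : ℝ) :
    Integrable (fun x => ⟪g (t, x), h (t, x)⟫_ℝ) :=
  (integrable_norm_mul_norm_comp_prodMk_right g h t).mono'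
    ((g.continuous.comp (Continuous.prodMk_right t)).inner
      (h.continuous.comp (Continuous.prodMk_right t))).aestronglyMeasurable
    (Eventually.of_forall fun _ => norm_inner_le_norm _ _)

theorem integrable_norm_sq_comp_prodMk_right (g : 𝓢(ℝ × ℝ, E)) (t : ℝ) :
    Integrable (fun x => ‖g (t, x)‖ ^ 2) := by
  simpa only [real_inner_self_eq_norm_sq] using integrable_inner_comp_prodMk_right g g t

theorem hasDerivAt_sliceEnergy (g : 𝓢(ℝ × ℝ, E)) (t : ℝ) :
    HasDerivAt g.sliceEnergy (2 * ∫ x, ⟪g (t, x), ∂ₜ g (t, x)⟫_ℝ) t := by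
  obtain ⟨C, hC⟩ := exists_norm_mul_norm_le g (∂ₜ g)
  rw [← integral_const_mul]
  refine (hasDerivAt_integral_of_dominated_loc_of_deriv_le
    (F' := fun s x => 2 * ⟪g (s, x), ∂ₜ g (s, x)⟫_ℝ) (bound := fun x => 2 * (C * (1 + x ^ 2)⁻¹))
    univ_mem
    (Eventually.of_forall fun s => (integrable_norm_sq_comp_prodMk_right g s).aestronglyMeasurable)
    (integrable_norm_sq_comp_prodMk_right g t)
    ((integrable_inner_comp_prodMk_right g (∂ₜ g) t).const_mul 2).aestronglyMeasurable
    (Eventually.of_forall fun x s _ => ?_)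
    ((integrable_inv_one_add_sq.const_mul C).const_mul 2)
    (Eventually.of_forall fun x s _ => (g.hasDerivAt_comp_prodMk_left s x).norm_sq)).2
  rw [norm_mul, Real.norm_two]
  gcongr
  exact (norm_inner_le_norm _ _).trans (hC s x)

theorem integral_inner_lineDeriv_right (g h : 𝓢(ℝ × ℝ, E)) (t : ℝ) :
    ∫ x, ⟪g (t, x), ∂ₓ h (t, x)⟫_ℝ = -∫ x, ⟪∂ₓ g (t, x), h (t, x)⟫_ℝ := by
  have hg' := integrable_inner_comp_prodMk_right g (∂ₓ h) t
  have hh' := integrable_inner_comp_prodMk_right (∂ₓ g) h t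
  have hsum := integral_eq_zero_of_hasDerivAt_of_integrable
    (fun x => (g.hasDerivAt_comp_prodMk_right t x).inner ℝ (h.hasDerivAt_comp_prodMk_right t x))
    (hg'.add hh') (integrable_inner_comp_prodMk_right g h t)
  rw [integral_add hg' hh'] at hsum
  linarith

theorem integral_inner_lineDeriv_self_eq_zero (g : 𝓢(ℝ × ℝ, E)) (t : ℝ) :
    ∫ x, ⟪g (t, x), ∂ₓ g (t, x)⟫_ℝ = 0 := by
  have h := integral_inner_lineDeriv_right g g t
  have hcomm : ∫ x, ⟪∂ₓ g (t, x), g (t, x)⟫_ℝ = ∫ x, ⟪g (t, x), ∂ₓ g (t, x)⟫_ℝ :=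
    integral_congr_ae (Eventually.of_forall fun x => real_inner_comm _ _)
  linarith

theorem integral_inner_le_sqrt_mul_sqrt (g h : 𝓢(ℝ × ℝ, E)) (t : ℝ) :
    ∫ x, ⟪g (t, x), h (t, x)⟫_ℝ ≤ √(g.sliceEnergy t) * √(h.sliceEnergy t) := by
  have hL2 : ∀ k : 𝓢(ℝ × ℝ, E), MemLp (fun x => ‖k (t, x)‖) (ENNReal.ofReal 2) := fun k => by
    rw [ENNReal.ofReal_ofNat]
    exact (memLp_two_iff_integrable_sq
      (k.continuous.comp (Continuous.prodMk_right t)).norm.aestronglyMeasurable).2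
      (integrable_norm_sq_comp_prodMk_right k t)
  have hHolder := integral_mul_le_Lp_mul_Lq_of_nonneg Real.HolderConjugate.two_two
    (Eventually.of_forall fun x => norm_nonneg (g (t, x)))
    (Eventually.of_forall fun x => norm_nonneg (h (t, x))) (hL2 g) (hL2 h)
  simp only [Real.rpow_two, ← Real.sqrt_eq_rpow] at hHolder
  exact (integral_mono (integrable_inner_comp_prodMk_right g h t)
    (integrable_norm_mul_norm_comp_prodMk_right g h t) fun x => real_inner_le_norm _ _).trans
    hHolder

theorem integral_inner_timeDeriv_le (u : 𝓢(ℝ × ℝ, E)) (t : ℝ) :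
    ∫ x, ⟪u (t, x), ∂ₜ u (t, x)⟫_ℝ ≤ √(u.sliceEnergy t) * √(u.kdvb.sliceEnergy t) := by
  have hI := integrable_inner_comp_prodMk_right u
  have hdispersive : ∫ x, ⟪u (t, x), (∂ₓ^[3] u) (t, x)⟫_ℝ = 0 := by
    rw [Function.iterate_succ_apply', integral_inner_lineDeriv_right, Function.iterate_succ_apply',
      Function.iterate_one, integral_inner_lineDeriv_self_eq_zero, neg_zero]
  have hdissipative : ∫ x, ⟪u (t, x), (∂ₓ^[2] u) (t, x)⟫_ℝ ≤ 0 := by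
    rw [Function.iterate_succ_apply', Function.iterate_one, integral_inner_lineDeriv_right,
      neg_nonpos]
    exact integral_nonneg fun _ => real_inner_self_nonneg
  have hdamping : 0 ≤ ∫ x, ⟪u (t, x), u (t, x)⟫_ℝ := integral_nonneg fun _ => real_inner_self_nonneg
  have hsplit : ∫ x, ⟪u (t, x), u.kdvb (t, x)⟫_ℝ = (∫ x, ⟪u (t, x), ∂ₜ u (t, x)⟫_ℝ)
      + (∫ x, ⟪u (t, x), (∂ₓ^[3] u) (t, x)⟫_ℝ) - (∫ x, ⟪u (t, x), (∂ₓ^[2] u) (t, x)⟫_ℝ)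
      + ∫ x, ⟪u (t, x), u (t, x)⟫_ℝ := by
    simp only [kdvb, add_apply, sub_apply, inner_add_right, inner_sub_right]
    rw [integral_add ?_ (hI _ t), integral_sub ?_ (hI _ t), integral_add (hI _ t) (hI _ t)]
    exacts [(hI _ t).add (hI _ t), ((hI _ t).add (hI _ t)).sub (hI _ t)]
  linarith [integral_inner_le_sqrt_mul_sqrt u u.kdvb t]

theorem sqrt_sliceEnergy_le_two_mul_integral (u : 𝓢(ℝ × ℝ, E)) (t : ℝ) :
    √(u.sliceEnergy t) ≤ 2 * ∫ s, √(u.kdvb.sliceEnergy s) := by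
  obtain ⟨Cu, hCu₀, hCu⟩ := exists_sqrt_sliceEnergy_le u
  obtain ⟨Cw, -, hCw⟩ := exists_sqrt_sliceEnergy_le u.kdvb
  have hinv : ∀ s : ℝ, (1 + s ^ 2)⁻¹ ≤ 1 := fun s => inv_le_one_of_one_le₀ (by nlinarith)
  have hE : ∀ s, u.sliceEnergy s ≤ (Cu * (1 + s ^ 2)⁻¹) ^ 2 := fun s => by
    rw [← Real.sq_sqrt (u.sliceEnergy_nonneg s)]
    gcongr
    exact hCu s
  have hdecay : Tendsto (fun s : ℝ => (1 + s ^ 2)⁻¹) atBot (𝓝 0) :=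
    (tendsto_atTop_mono (fun s => by nlinarith [sq_nonneg (s + 1 / 2)])
      tendsto_neg_atBot_atTop).inv_tendsto_atTop
  have hcont : Continuous u.kdvb.sliceEnergy :=
    continuous_iff_continuousAt.2 fun s => (u.kdvb.hasDerivAt_sliceEnergy s).continuousAt
  refine sqrt_le_two_mul_integral_of_deriv_le u.hasDerivAt_sliceEnergy (fun s => ?_) ?_
    (fun s => Real.sqrt_nonneg _) ?_ ?_ t
  · linarith [integral_inner_timeDeriv_le u s]
  · exact (integrable_inv_one_add_sq.const_mul Cw).mono'
      (Real.continuous_sqrt.comp hcont).aestronglyMeasurable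
      (Eventually.of_forall fun s => (Real.norm_of_nonneg (Real.sqrt_nonneg _)).trans_le (hCw s))
  · refine ⟨Cu ^ 2, forall_mem_range.2 fun s => (hE s).trans ?_⟩
    gcongr
    exact mul_le_of_le_one_right hCu₀ (hinv s)
  · refine squeeze_zero u.sliceEnergy_nonneg hE ?_
    simpa using (hdecay.const_mul Cu).pow 2

end InnerProductSpace

end SchwartzMap

theorem kdvbOp_eq (u : 𝓢(ℝ × ℝ, ℂ)) (t x : ℝ) :
    kdvbOp (fun s y => u (s, y)) t x = u.kdvb (t, x) := by
  simp only [kdvbOp, SchwartzMap.kdvb, add_apply, sub_apply,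
    (u.hasDerivAt_comp_prodMk_left t x).deriv, SchwartzMap.iteratedDeriv_comp_prodMk_right]

/-- For any Schwartz function `u(t,x)`,
`‖u‖_{L^∞_t L²_x} ≤ C ‖(∂_t + ∂ₓₓₓ − ∂ₓₓ + I)u‖_{L¹_t L²_x}`. -/
theorem LinftyL2_bound_by_Y_norm :
    ∃ C > (0 : ℝ), ∀ u : SchwartzMap (ℝ × ℝ) ℂ, ∀ t : ℝ,
      (∫ x : ℝ, ‖u (t, x)‖ ^ 2) ^ ((1 : ℝ) / 2)
        ≤ C * ∫ s : ℝ, (∫ x : ℝ, ‖kdvbOp (fun s' y => u (s', y)) s x‖ ^ 2) ^ ((1 : ℝ) / 2) := by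
  refine ⟨2, two_pos, fun u t => ?_⟩
  simp only [← Real.sqrt_eq_rpow, kdvbOp_eq]
  exact u.sqrt_sliceEnergy_le_two_mul_integral t
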